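/- arXiv:1508.01511 — 2 statements merged into one kernel-verified Lean document; each statement's English description precedes it below -/
import Mathlib

section
/- For all β, λ, y ∈ ℂ and every integer m ≥ 1, the polynomials s^(+)_m satisfy the three-step recurrence s^(+)_m(y) = (y + 2(m−1)(λ+m−1) + (β/2)(λ−β/2+1))·s^(+)_{m−1}(y) − (m−1)(λ+m−2)(λ−β/2+m−1)(β/2+m−2)·s^(+)_{m−2}(y), where for m = 1 the term s^(+)_{−1} is taken to be 0 (its scalar coefficient (m−1)(λ+m−2)(λ−β/2+m−1)(β/2+m−2) vanishes for m = 1). -/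
open Finset

/-- Ascending Pochhammer symbol `(a)_k = ∏_{i=0}^{k-1} (a+i)`. -/
noncomputable def poch (a : ℂ) (k : ℕ) : ℂ := ∏ i ∈ Finset.range k, (a + i)

/-- `R_k(y;α) = ∏_{l=1}^{k} (y - (α-l)(α-l+1))`. -/
noncomputable def Rpoly (y α : ℂ) (k : ℕ) : ℂ :=
  ∏ l ∈ Finset.range k, (y - (α - (l + 1)) * (α - (l + 1) + 1))

/-- `R^(1)_k(y) = ∑_{j=1}^{k} (β/2-k+j+1)_{2(k-j)} (y - (β/2)(β/2+1)) R_{j-1}(y;k)`. -/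
noncomputable def R1 (β y : ℂ) (k : ℕ) : ℂ :=
  ∑ j ∈ Finset.Icc 1 k,
    poch (β/2 - k + j + 1) (2*(k - j)) * (y - β/2*(β/2+1)) * Rpoly y k (j-1)

/-- `s^(-)_m(y)`. -/
noncomputable def sminus (β lam y : ℂ) (m : ℕ) : ℂ :=
  ∑ k ∈ Finset.range (m+1),
    (m.choose k : ℂ) * poch (β/2 - lam - m) (m-k) * poch (-β/2 - m - 1) (m-k) * Rpoly y 0 k

/-- `s^(+)_m(y)`. -/
noncomputable def splus (β lam y : ℂ) (m : ℕ) : ℂ :=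
  ∑ k ∈ Finset.range (m+1),
    (m.choose k : ℂ) * poch (β/2 - lam - m) (m-k) * poch (-β/2 - m + 1) (m-k) * Rpoly y 0 k

/-- Coefficients `D^(1)_k(m)`. -/
noncomputable def D1 (β lam : ℂ) (m k : ℕ) : ℂ :=
  if k = m then lam - β + 2*m
  else (m.choose k : ℂ) * poch (lam - β/2 + k + 1) (m-k) * poch (β/2 + k + 1) (m-k-1) *
    ((k:ℂ)*(lam+β+2*m) + β/2*(lam-β-2*m))

/-- `s^(1)_m(y) = ∑_{k=0}^m D^(1)_k(m) R^(1)_k(y)`. -/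
noncomputable def s1 (β lam y : ℂ) (m : ℕ) : ℂ :=
  ∑ k ∈ Finset.range (m+1), D1 β lam m k * R1 β y k


noncomputable def acoef (β lam : ℂ) (p k : ℕ) : ℂ :=
  (p.choose k : ℂ) * poch (β/2 - lam - p) (p-k) * poch (-β/2 - p + 1) (p-k)

lemma poch_congr {a b : ℂ} (h : a = b) (p : ℕ) : poch a p = poch b p := by rw [h]

lemma poch_succ (a : ℂ) (p : ℕ) : poch a (p+1) = poch a p * (a + p) :=
  Finset.prod_range_succ _ _

lemma poch_succ_left (a : ℂ) (p : ℕ) : poch a (p+1) = a * poch (a+1) p := by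
  have h : poch a (p+1) = (∏ i ∈ Finset.range p, (a + ((i+1 : ℕ) : ℂ))) * (a + ((0:ℕ):ℂ)) :=
    Finset.prod_range_succ' _ _
  have h2 : (∏ i ∈ Finset.range p, (a + ((i+1 : ℕ) : ℂ))) = poch (a+1) p :=
    Finset.prod_congr rfl fun i _ => by push_cast; ring
  rw [h, h2]; push_cast; ring

lemma Rpoly_zero_succ (y : ℂ) (k : ℕ) :
    Rpoly y 0 (k+1) = Rpoly y 0 k * (y - ((k:ℂ)+1)*k) := by
  simp only [Rpoly, Finset.prod_range_succ]
  congr 1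
  push_cast
  ring

lemma acoef_eq_zero (β lam : ℂ) {p k : ℕ} (h : p < k) : acoef β lam p k = 0 := by
  simp [acoef, Nat.choose_eq_zero_of_lt h]

lemma acoef_zero_succ (β lam : ℂ) (p : ℕ) :
    acoef β lam (p+1) 0 = ((β/2 - lam - (p:ℂ) - 1) * (-β/2 - (p:ℂ))) * acoef β lam p 0 := by
  simp only [acoef, Nat.choose_zero_right, Nat.cast_one, one_mul, Nat.sub_zero]
  rw [poch_succ_left, poch_succ_left,
      poch_congr (show β/2 - lam - ((p+1 : ℕ):ℂ) + 1 = β/2 - lam - (p:ℂ) by push_cast; ring) p,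
      poch_congr (show -β/2 - ((p+1 : ℕ):ℂ) + 1 + 1 = -β/2 - (p:ℂ) + 1 by push_cast; ring) p]
  push_cast
  ring

lemma acoef_key (β lam : ℂ) (n k : ℕ) (hk : k ≤ n + 2) :
    acoef β lam (n+2) k
      = (if k = 0 then 0 else acoef β lam (n+1) (k-1))
        + (((k:ℂ)+1)*k + (2*((n:ℂ)+1)*(lam+(n:ℂ)+1) + β/2*(lam-β/2+1))) * acoef β lam (n+1) k
        - (((n:ℂ)+1)*(lam+(n:ℂ))*(lam-β/2+(n:ℂ)+1)*(β/2+(n:ℂ))) * acoef β lam n k := by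
  rcases k with _ | j
  · rw [if_pos rfl]
    rw [show (n:ℕ)+2 = (n+1)+1 from rfl, acoef_zero_succ, acoef_zero_succ]
    push_cast
    ring
  · have hj : j ≤ n + 1 := by omega
    rw [if_neg (Nat.succ_ne_zero j), Nat.add_sub_cancel]
    rcases Nat.lt_or_ge j (n+1) with hjn' | hge
    · have hjn : j ≤ n := by omega
      have hT1 : acoef β lam (n+2) (j+1)
          = ((n+2).choose (j+1) : ℂ) * ((β/2-lam-(n:ℂ)-2) * (-β/2-(n:ℂ)-1))
            * (poch (β/2 - lam - ((n:ℂ)+1)) (n-j) * poch (-β/2 - (n:ℂ)) (n-j)) := by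
        simp only [acoef]
        rw [show (n+2) - (j+1) = (n-j)+1 from by omega,
            poch_succ_left, poch_succ_left,
            poch_congr (show β/2 - lam - ((n+2:ℕ):ℂ) + 1 = β/2 - lam - ((n:ℂ)+1) by push_cast; ring) (n-j),
            poch_congr (show -β/2 - ((n+2:ℕ):ℂ) + 1 + 1 = -β/2 - (n:ℂ) by push_cast; ring) (n-j)]
        push_cast; ring
      have hT2 : acoef β lam (n+1) j
          = ((n+1).choose j : ℂ) * ((β/2-lam-(j:ℂ)-1) * (-β/2-(j:ℂ)))
            * (poch (β/2 - lam - ((n:ℂ)+1)) (n-j) * poch (-β/2 - (n:ℂ)) (n-j)) := by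
        simp only [acoef]
        rw [show (n+1) - j = (n-j)+1 from by omega,
            poch_succ, poch_succ,
            poch_congr (show -β/2 - ((n+1:ℕ):ℂ) + 1 = -β/2 - (n:ℂ) by push_cast; ring) (n-j),
            poch_congr (show β/2 - lam - ((n+1:ℕ):ℂ) = β/2 - lam - ((n:ℂ)+1) by push_cast; ring) (n-j)]
        simp only [Nat.cast_sub hjn]
        push_cast; ring
      have hT3 : acoef β lam (n+1) (j+1)
          = ((n+1).choose (j+1) : ℂ)
            * (poch (β/2 - lam - ((n:ℂ)+1)) (n-j) * poch (-β/2 - (n:ℂ)) (n-j)) := by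
        simp only [acoef]
        rw [show (n+1) - (j+1) = n-j from by omega,
            poch_congr (show β/2 - lam - ((n+1:ℕ):ℂ) = β/2 - lam - ((n:ℂ)+1) by push_cast; ring) (n-j),
            poch_congr (show -β/2 - ((n+1:ℕ):ℂ) + 1 = -β/2 - (n:ℂ) by push_cast; ring) (n-j)]
        ring
      have hT4 : (((n:ℂ)+1)*(lam+(n:ℂ))*(lam-β/2+(n:ℂ)+1)*(β/2+(n:ℂ))) * acoef β lam n (j+1)
          = ((n:ℂ)+1)*(lam+(n:ℂ)) * (((n.choose (j+1)) : ℂ)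
            * (poch (β/2 - lam - ((n:ℂ)+1)) (n-j) * poch (-β/2 - (n:ℂ)) (n-j))) := by
        rcases Nat.lt_or_ge j n with hlt | hge2
        · have h1 : poch (β/2 - lam - ((n:ℂ)+1)) (n-j)
              = (β/2 - lam - ((n:ℂ)+1)) * poch (β/2 - lam - (n:ℂ)) (n-(j+1)) := by
            rw [show n - j = (n-(j+1))+1 from by omega, poch_succ_left,
                poch_congr (show β/2 - lam - ((n:ℂ)+1) + 1 = β/2 - lam - (n:ℂ) by ring) (n-(j+1))]
          have h2 : poch (-β/2 - (n:ℂ)) (n-j)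
              = (-β/2 - (n:ℂ)) * poch (-β/2 - (n:ℂ) + 1) (n-(j+1)) := by
            rw [show n - j = (n-(j+1))+1 from by omega, poch_succ_left]
          simp only [acoef]
          rw [h1, h2]
          ring
        · have hje : j = n := by omega
          subst hje
          simp [acoef_eq_zero β lam (show j < j+1 by omega), Nat.choose_succ_self]
      have hP1 : (((n+2).choose (j+1) : ℕ) : ℂ) = ((n+1).choose j : ℂ) + ((n+1).choose (j+1) : ℂ) := by
        have : (n+2).choose (j+1) = (n+1).choose j + (n+1).choose (j+1) := Nat.choose_succ_succ (n+1) j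
        exact_mod_cast congrArg (Nat.cast (R := ℂ)) this
      have hP2 : (((n+1).choose (j+1) : ℕ) : ℂ) = (n.choose j : ℂ) + (n.choose (j+1) : ℂ) := by
        have : (n+1).choose (j+1) = n.choose j + n.choose (j+1) := Nat.choose_succ_succ n j
        exact_mod_cast congrArg (Nat.cast (R := ℂ)) this
      have hB : ((n:ℂ)+1) * (n.choose j : ℂ) = ((n+1).choose (j+1) : ℂ) * ((j:ℂ)+1) := by
        have := Nat.add_one_mul_choose_eq n j
        have h' := congrArg (Nat.cast (R := ℂ)) this
        push_cast at h'
        linear_combination h'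
      have hA : ((n+1).choose (j+1) : ℂ) * ((j:ℂ)+1) = ((n+1).choose j : ℂ) * (((n:ℂ)+1) - j) := by
        have := Nat.choose_succ_right_eq (n+1) j
        have h' := congrArg (Nat.cast (R := ℂ)) this
        push_cast [Nat.cast_sub (show j ≤ n+1 by omega)] at h'
        linear_combination h'
      have h2 : (n.choose (j+1) : ℂ) * ((j:ℂ)+1) = (n.choose j : ℂ) * ((n:ℂ) - j) := by
        have := Nat.choose_succ_right_eq n j
        have h' := congrArg (Nat.cast (R := ℂ)) this
        push_cast [Nat.cast_sub hjn] at h'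
        linear_combination h'
      rw [hT1, hT2, hT3, hT4]
      push_cast
      linear_combination
        (poch (β/2 - lam - ((n:ℂ)+1)) (n-j) * poch (-β/2 - (n:ℂ)) (n-j)) *
          ( ((β/2-lam-(n:ℂ)-2) * (-β/2-(n:ℂ)-1)) * hP1
            + ((β/2-lam-(n:ℂ)-2) * (-β/2-(n:ℂ)-1)
               - (((j:ℂ)+2)*((j:ℂ)+1) + (2*((n:ℂ)+1)*(lam+(n:ℂ)+1) + β/2*(lam-β/2+1)))) * hP2
            - (lam+(n:ℂ)+2+(j:ℂ)) * hA
            - (lam+(n:ℂ)+2+(j:ℂ)) * hB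
            - ((j:ℂ)+2) * h2 )
    · have hje : j = n+1 := by omega
      subst hje
      rw [acoef_eq_zero β lam (show n+1 < n+1+1 by omega),
          acoef_eq_zero β lam (show n < n+1+1 by omega)]
      have hone : ∀ p, acoef β lam p p = 1 := fun p => by
        simp [acoef, Nat.sub_self, Nat.choose_self, poch]
      rw [show (n:ℕ)+1+1 = n+2 from rfl, hone, hone]
      ring

lemma splus_rec_aux (β lam y : ℂ) (n : ℕ) :
    splus β lam y (n+2)
      = (y + (2*((n:ℂ)+1)*(lam+(n:ℂ)+1) + β/2*(lam-β/2+1))) * splus β lam y (n+1)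
        - (((n:ℂ)+1)*(lam+(n:ℂ))*(lam-β/2+(n:ℂ)+1)*(β/2+(n:ℂ))) * splus β lam y n := by
  have e2 : splus β lam y (n+2) = ∑ k ∈ Finset.range (n+2+1), acoef β lam (n+2) k * Rpoly y 0 k := rfl
  have e1 : splus β lam y (n+1) = ∑ k ∈ Finset.range (n+2), acoef β lam (n+1) k * Rpoly y 0 k := rfl
  have e0 : splus β lam y n = ∑ k ∈ Finset.range (n+1), acoef β lam n k * Rpoly y 0 k := rfl
  rw [e2, e1, e0]
  have hstep : ∀ k ∈ Finset.range (n+2+1),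
      acoef β lam (n+2) k * Rpoly y 0 k
        = (if k = 0 then 0 else acoef β lam (n+1) (k-1)) * Rpoly y 0 k
          + ((((k:ℂ)+1)*k + (2*((n:ℂ)+1)*(lam+(n:ℂ)+1) + β/2*(lam-β/2+1))) * acoef β lam (n+1) k) * Rpoly y 0 k
          - ((((n:ℂ)+1)*(lam+(n:ℂ))*(lam-β/2+(n:ℂ)+1)*(β/2+(n:ℂ))) * acoef β lam n k) * Rpoly y 0 k := by
    intro k hk
    rw [acoef_key β lam n k (by have := Finset.mem_range.mp hk; omega)]
    ring
  rw [Finset.sum_congr rfl hstep, Finset.sum_sub_distrib, Finset.sum_add_distrib]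
  have ha1 : (∑ k ∈ Finset.range (n+2+1), (if k = 0 then (0:ℂ) else acoef β lam (n+1) (k-1)) * Rpoly y 0 k)
      = ∑ i ∈ Finset.range (n+2), acoef β lam (n+1) i * Rpoly y 0 (i+1) := by
    rw [Finset.sum_range_succ']
    simp
  have ha2 : (∑ k ∈ Finset.range (n+2+1), ((((k:ℂ)+1)*k + (2*((n:ℂ)+1)*(lam+(n:ℂ)+1) + β/2*(lam-β/2+1))) * acoef β lam (n+1) k) * Rpoly y 0 k)
      = ∑ i ∈ Finset.range (n+2), ((((i:ℂ)+1)*i + (2*((n:ℂ)+1)*(lam+(n:ℂ)+1) + β/2*(lam-β/2+1))) * acoef β lam (n+1) i) * Rpoly y 0 i := by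
    rw [Finset.sum_range_succ, acoef_eq_zero β lam (show n+1 < n+2 by omega)]
    simp
  have ha3 : (∑ k ∈ Finset.range (n+2+1), ((((n:ℂ)+1)*(lam+(n:ℂ))*(lam-β/2+(n:ℂ)+1)*(β/2+(n:ℂ))) * acoef β lam n k) * Rpoly y 0 k)
      = ((n:ℂ)+1)*(lam+(n:ℂ))*(lam-β/2+(n:ℂ)+1)*(β/2+(n:ℂ)) * ∑ k ∈ Finset.range (n+1), acoef β lam n k * Rpoly y 0 k := by
    rw [Finset.sum_range_succ, acoef_eq_zero β lam (show n < n+2 by omega),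
        Finset.sum_range_succ, acoef_eq_zero β lam (show n < n+1 by omega), Finset.mul_sum]
    simp [mul_assoc]
  rw [ha1, ha2, ha3]
  have hy : (∑ i ∈ Finset.range (n+2), acoef β lam (n+1) i * Rpoly y 0 (i+1))
      + (∑ i ∈ Finset.range (n+2), ((((i:ℂ)+1)*i + (2*((n:ℂ)+1)*(lam+(n:ℂ)+1) + β/2*(lam-β/2+1))) * acoef β lam (n+1) i) * Rpoly y 0 i)
      = (y + (2*((n:ℂ)+1)*(lam+(n:ℂ)+1) + β/2*(lam-β/2+1))) * ∑ k ∈ Finset.range (n+2), acoef β lam (n+1) k * Rpoly y 0 k := by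
    rw [← Finset.sum_add_distrib, Finset.mul_sum]
    refine Finset.sum_congr rfl fun i _ => ?_
    rw [Rpoly_zero_succ]
    ring
  rw [hy]


/-- three-step recurrence for `s^(+)_m`, m ≥ 1. For m = 1 the natural-number
index `m-2` equals 0, but its scalar coefficient `(m-1)(λ+m-2)(λ-β/2+m-1)(β/2+m-2)` vanishes. -/
theorem splus_recurrence (β lam y : ℂ) (m : ℕ) (hm : 1 ≤ m) :
    splus β lam y m =
      (y + 2*((m:ℂ) - 1)*(lam + m - 1) + β/2*(lam - β/2 + 1)) * splus β lam y (m-1)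
      - ((m:ℂ) - 1)*(lam + m - 2)*(lam - β/2 + m - 1)*(β/2 + m - 2) * splus β lam y (m-2) := by
  obtain _ | m := m
  · exact absurd hm (by omega)
  obtain _ | n := m
  · show splus β lam y 1
        = (y + 2*(((1:ℕ):ℂ) - 1)*(lam + ((1:ℕ):ℂ) - 1) + β/2*(lam - β/2 + 1)) * splus β lam y 0
          - (((1:ℕ):ℂ) - 1)*(lam + ((1:ℕ):ℂ) - 2)*(lam - β/2 + ((1:ℕ):ℂ) - 1)*(β/2 + ((1:ℕ):ℂ) - 2) * splus β lam y 0
    simp [splus, poch, Rpoly, Finset.sum_range_succ, Finset.prod_range_one]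
    push_cast
    ring
  · have h := splus_rec_aux β lam y n
    rw [show splus β lam y (n+1+1) = splus β lam y (n+2) from rfl,
        show splus β lam y (n+1+1-1) = splus β lam y (n+1) from rfl,
        show splus β lam y (n+1+1-2) = splus β lam y n from rfl,
        h]
    push_cast
    ring
end

section
/- Let β ∈ ℂ, let m ≥ 1 be an integer, and let i be an integer with 1 ≤ i ≤ m. Assume β/2−m+j ≠ 0 and −β/2−m+j−1 ≠ 0 for every integer j with 1 ≤ j ≤ m (i.e. all factors of the Pochhammer symbols (β/2−m+1)_j and (−β/2−m)_j appearing below are nonzero). Then the evaluation of R^(1)_m at the root i(i−1) of R_m(·;0) is given by R^(1)_m(i(i−1)) = (β/2−m+1)_{2m} · (β/2+i)(β/2−i+1) · ∑_{j=1}^{m} ((−m−i+1)_{j−1} (−m+i)_{j−1})/((β/2−m+1)_j (−β/2−m)_j). -/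
open Finset

lemma poch_add (a : ℂ) (k l : ℕ) : poch a (k + l) = poch a k * poch (a + k) l := by
  unfold poch
  rw [Finset.prod_range_add]
  congr 1
  apply Finset.prod_congr rfl
  intro x _
  push_cast
  ring

lemma poch_succ_front (a : ℂ) (n : ℕ) : poch a (n + 1) = a * poch (a + 1) n := by
  rw [show n + 1 = 1 + n by omega, poch_add]
  simp [poch]

lemma poch_succ_back (a : ℂ) (n : ℕ) : poch a (n + 1) = poch a n * (a + n) := by
  unfold poch
  rw [Finset.prod_range_succ]

lemma poch_reflect (a : ℂ) (n : ℕ) : poch a n = (-1)^n * poch (-a - n + 1) n := by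
  induction n with
  | zero => simp [poch]
  | succ n ih =>
      rw [poch_succ_back, ih]
      have h1 : -a - (↑(n+1) : ℂ) + 1 = (-a - n) := by push_cast; ring
      rw [h1, poch_succ_front]
      have h2 : (-a - (n:ℂ)) + 1 = -a - n + 1 := by ring
      rw [h2]
      ring

/-- evaluation of `R^(1)_m` at the root `i(i-1)` of `R_m(·;0)`. -/
theorem R1_eval_at_root (β : ℂ) (m i : ℕ) (hm : 1 ≤ m) (hi1 : 1 ≤ i) (him : i ≤ m)
    (h1 : ∀ j : ℕ, 1 ≤ j → j ≤ m → β/2 - (m:ℂ) + (j:ℂ) ≠ 0)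
    (h2 : ∀ j : ℕ, 1 ≤ j → j ≤ m → -β/2 - (m:ℂ) + (j:ℂ) - 1 ≠ 0) :
    R1 β ((i:ℂ)*((i:ℂ)-1)) m =
      poch (β/2 - (m:ℂ) + 1) (2*m) * (β/2 + (i:ℂ)) * (β/2 - (i:ℂ) + 1) *
        ∑ j ∈ Finset.Icc 1 m,
          poch (-(m:ℂ) - (i:ℂ) + 1) (j-1) * poch (-(m:ℂ) + (i:ℂ)) (j-1) /
            (poch (β/2 - (m:ℂ) + 1) j * poch (-β/2 - (m:ℂ)) j) := by
  unfold R1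
  rw [Finset.mul_sum]
  apply Finset.sum_congr rfl
  intro j hj
  rw [Finset.mem_Icc] at hj
  obtain ⟨hj1, hj2⟩ := hj
  -- nonvanishing of denominators
  have hA : poch (β/2 - (m:ℂ) + 1) j ≠ 0 := by
    unfold poch
    apply Finset.prod_ne_zero_iff.mpr
    intro t ht
    rw [Finset.mem_range] at ht
    have := h1 (t+1) (by omega) (by omega)
    have hc : β/2 - (m:ℂ) + 1 + (t:ℂ) = β/2 - (m:ℂ) + ((t+1 : ℕ) : ℂ) := by
      push_cast; ring
    rw [hc]; exact this
  have hB : poch (-β/2 - (m:ℂ)) j ≠ 0 := by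
    unfold poch
    apply Finset.prod_ne_zero_iff.mpr
    intro t ht
    rw [Finset.mem_range] at ht
    have := h2 (t+1) (by omega) (by omega)
    have hc : -β/2 - (m:ℂ) + (t:ℂ) = -β/2 - (m:ℂ) + ((t+1 : ℕ) : ℂ) - 1 := by
      push_cast; ring
    rw [hc]; exact this
  -- splitting of the big Pochhammer
  have e1 : poch (β/2 - (m:ℂ) + 1) (2*m)
      = poch (β/2 - (m:ℂ) + 1) j * poch (β/2 - (m:ℂ) + (j:ℂ) + 1) (2*(m-j)) *
        poch (β/2 + (m:ℂ) - (j:ℂ) + 1) j := by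
    rw [show 2*m = j + (2*(m-j) + j) by omega, poch_add, poch_add]
    have c1 : β/2 - (m:ℂ) + 1 + (j:ℂ) = β/2 - (m:ℂ) + (j:ℂ) + 1 := by ring
    have c2 : β/2 - (m:ℂ) + (j:ℂ) + 1 + ((2*(m-j) : ℕ) : ℂ)
        = β/2 + (m:ℂ) - (j:ℂ) + 1 := by
      have : ((m - j : ℕ) : ℂ) = (m:ℂ) - (j:ℂ) := by
        rw [Nat.cast_sub hj2]
      push_cast [this]; ring
    rw [c1, c2, mul_assoc]
  have e2 : poch (β/2 + (m:ℂ) - (j:ℂ) + 1) j = (-1)^j * poch (-β/2 - (m:ℂ)) j := by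
    rw [poch_reflect (β/2 + (m:ℂ) - (j:ℂ) + 1) j]
    have : -(β/2 + (m:ℂ) - (j:ℂ) + 1) - (j:ℂ) + 1 = -β/2 - (m:ℂ) := by ring
    rw [this]
  have e3 : Rpoly ((i:ℂ)*((i:ℂ)-1)) (m:ℂ) (j-1)
      = (-1)^(j-1) * (poch (-(m:ℂ) - (i:ℂ) + 1) (j-1) * poch (-(m:ℂ) + (i:ℂ)) (j-1)) := by
    unfold Rpoly poch
    rw [← Finset.prod_mul_distrib]
    rw [show ((-1:ℂ))^(j-1) = ∏ _l ∈ Finset.range (j-1), (-1:ℂ) by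
      rw [Finset.prod_const, Finset.card_range]]
    rw [← Finset.prod_mul_distrib]
    apply Finset.prod_congr rfl
    intro l _
    ring
  rw [e1, e2, e3, ← mul_div_assoc, eq_div_iff (mul_ne_zero hA hB)]
  obtain ⟨j', rfl⟩ : ∃ j', j = j' + 1 := ⟨j - 1, by omega⟩
  simp only [Nat.add_sub_cancel, pow_succ]
  ring
end
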